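/- arXiv:1510.00461 — 4 statements merged into one kernel-verified Lean document; each statement's English description precedes it below -/
import Mathlib

section
/- Let {w_k}, {p_k}, {q_k} be sequences of nonnegative real numbers with w_{k+1} ≤ (1 + p_k) w_k + q_k for all k, ∑ p_k < ∞ and ∑ q_k < ∞. Then the sequence {w_k} converges. -/
/-! Dividing by the partial products `P k = ∏_{j<k} (1 + p j)` turns the recursion into
`w (k+1) / P (k+1) ≤ w k / P k + q k`. A sequence bounded below whose increments are dominated by a
summable sequence converges, since subtracting the partial sums of `q` makes it antitone. The
products `P k` converge because `∑ p` does, so `w k = (w k / P k) * P k` converges too. -/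

open Filter Topology

theorem tendsto_of_le_add_of_summable {v q : ℕ → ℝ} (hv : BddBelow (Set.range v))
    (hrec : ∀ k, v (k + 1) ≤ v k + q k) (hq : Summable q) :
    ∃ L, Tendsto v atTop (𝓝 L) := by
  set S : ℕ → ℝ := fun k => ∑ j ∈ Finset.range k, q j
  have hS : Tendsto S atTop (𝓝 (∑' j, q j)) := hq.hasSum.tendsto_sum_nat
  have hanti : Antitone (v - S) := antitone_nat_of_succ_le fun k => by
    simp only [Pi.sub_apply, S, Finset.sum_range_succ]
    linarith [hrec k]
  have hbdd : BddBelow (Set.range (v - S)) := by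
    obtain ⟨a, ha⟩ := hv
    obtain ⟨b, hb⟩ := hS.bddAbove_range
    refine ⟨a - b, ?_⟩
    rintro _ ⟨k, rfl⟩
    exact sub_le_sub (ha ⟨k, rfl⟩) (hb ⟨k, rfl⟩)
  exact ⟨_, by simpa using (tendsto_atTop_ciInf hanti hbdd).add hS⟩

theorem div_mul_le_div_add_of_le_mul_add {x y a b c : ℝ} (hb : 0 < b) (hab : 1 ≤ a * b)
    (hc : 0 ≤ c) (h : y ≤ b * x + c) : y / (a * b) ≤ x / a + c := by
  have ha : a ≠ 0 := by rintro rfl; norm_num at hab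
  calc y / (a * b) ≤ (b * x + c) / (a * b) := by gcongr
    _ = x / a + c / (a * b) := by field_simp
    _ ≤ x / a + c := by gcongr; exact div_le_self hc hab

theorem stmt_1 (w p q : ℕ → ℝ)
    (hw : ∀ k, 0 ≤ w k) (hp : ∀ k, 0 ≤ p k) (hq : ∀ k, 0 ≤ q k)
    (hrec : ∀ k, w (k + 1) ≤ (1 + p k) * w k + q k)
    (hps : Summable p) (hqs : Summable q) :
    ∃ L : ℝ, Tendsto w atTop (nhds L) := by
  set P : ℕ → ℝ := fun k => ∏ j ∈ Finset.range k, (1 + p j)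
  have hP : ∀ k, 1 ≤ P k := fun k =>
    Finset.one_le_prod fun j _ => le_add_of_nonneg_right (hp j)
  have hPlim : Tendsto P atTop (𝓝 _) :=
    (Real.multipliable_one_add_of_summable hps).hasProd.tendsto_prod_nat
  have hPsucc : ∀ k, P (k + 1) = P k * (1 + p k) := fun k => Finset.prod_range_succ _ _
  have hstep : ∀ k, w (k + 1) / P (k + 1) ≤ w k / P k + q k := fun k => by
    rw [hPsucc]
    exact div_mul_le_div_add_of_le_mul_add (by linarith [hp k]) (hPsucc k ▸ hP (k + 1)) (hq k)
      (hrec k)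
  obtain ⟨L, hL⟩ := tendsto_of_le_add_of_summable
    ⟨0, by rintro _ ⟨k, rfl⟩; exact div_nonneg (hw k) (by linarith [hP k])⟩ hstep hqs
  exact ⟨_, (hL.mul hPlim).congr fun k => div_mul_cancel₀ _ (by linarith [hP k])⟩
end

section
/- Let f: ℝⁿ → ℝ be continuously differentiable at x. Then the limiting Fréchet ε-subdifferential of f at x equals ∇f(x) + εB, where B is the closed unit ball in ℝⁿ. -/
open Filter

/-- Fréchet ε-subdifferential of a real-valued function. -/
def fesub {n : ℕ} (ε : ℝ) (f : EuclideanSpace ℝ (Fin n) → ℝ) (x : EuclideanSpace ℝ (Fin n)) :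
    Set (EuclideanSpace ℝ (Fin n)) :=
  {v | ∀ η : ℝ, 0 < η → ∀ᶠ y in nhds x,
      f x + (inner ℝ v (y - x) : ℝ) - (ε + η) * ‖y - x‖ ≤ f y}

/-- Limiting Fréchet ε-subdifferential. -/
def lfesub {n : ℕ} (ε : ℝ) (f : EuclideanSpace ℝ (Fin n) → ℝ) (x : EuclideanSpace ℝ (Fin n)) :
    Set (EuclideanSpace ℝ (Fin n)) :=
  {v | ∃ (yl vl : ℕ → EuclideanSpace ℝ (Fin n)),
      Tendsto yl atTop (nhds x) ∧ Tendsto (fun l => f (yl l)) atTop (nhds (f x)) ∧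
      (∀ l, vl l ∈ fesub ε f (yl l)) ∧ Tendsto vl atTop (nhds v)}

/-!
A function differentiable at `y` has the closed ball `∇f(y) + εB` as its Fréchet
ε-subdifferential at `y`: Cauchy–Schwarz gives one inclusion, and testing the defining
inequality along the ray `y + t (v - ∇f(y))`, `t → 0⁺`, gives the other. For a `C¹` function the
gradient is continuous at `x`, so limits of these balls along `y → x` stay in the ball at `x`.
-/

open Topology InnerProductSpace
open scoped Gradient

section InnerProductSpace

variable {F : Type*} [NormedAddCommGroup F] [InnerProductSpace ℝ F]

lemma norm_le_of_eventually_inner_le {w y : F} {c : ℝ} (hc : 0 ≤ c)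
    (h : ∀ᶠ z in 𝓝 y, inner ℝ w (z - y) ≤ c * ‖z - y‖) : ‖w‖ ≤ c := by
  rcases eq_or_ne w 0 with rfl | hw
  · simpa using hc
  have hray : Tendsto (fun t : ℝ => y + t • w) (𝓝[>] 0) (𝓝 y) := by
    have : Continuous fun t : ℝ => y + t • w := by fun_prop
    simpa using (this.tendsto 0).mono_left nhdsWithin_le_nhds
  obtain ⟨t, ht, htpos⟩ := ((hray.eventually h).and self_mem_nhdsWithin).exists
  have htpos : (0 : ℝ) < t := htpos
  simp only [add_sub_cancel_left, real_inner_smul_right, real_inner_self_eq_norm_sq, norm_smul,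
    Real.norm_of_nonneg htpos.le] at ht
  have : 0 < t * ‖w‖ := mul_pos htpos (norm_pos_iff.mpr hw)
  nlinarith

variable [CompleteSpace F]

lemma HasGradientAt.eventually_abs_sub_inner_le {f : F → ℝ} {g y : F} (hf : HasGradientAt f g y)
    {η : ℝ} (hη : 0 < η) :
    ∀ᶠ z in 𝓝 y, |f z - f y - inner ℝ g (z - y)| ≤ η * ‖z - y‖ := by
  simpa using (hasGradientAt_iff_isLittleO.mp hf).def hη

lemma ContDiffAt.eventually_hasGradientAt {f : F → ℝ} {x : F} (hf : ContDiffAt ℝ 1 f x) :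
    ∀ᶠ y in 𝓝 x, HasGradientAt f (∇ f y) y :=
  (hf.eventually (by simp)).mono fun _ hy => (hy.differentiableAt one_ne_zero).hasGradientAt

lemma ContDiffAt.continuousAt_gradient {f : F → ℝ} {x : F}
    (hf : ContDiffAt ℝ 1 f x) : ContinuousAt (∇ f) x :=
  (toDual ℝ F).symm.continuous.continuousAt.comp (hf.continuousAt_fderiv one_ne_zero)

end InnerProductSpace

lemma fesub_eq_closedBall {n : ℕ} {ε : ℝ} (hε : 0 ≤ ε) {f : EuclideanSpace ℝ (Fin n) → ℝ}
    {g y : EuclideanSpace ℝ (Fin n)} (hf : HasGradientAt f g y) :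
    fesub ε f y = Metric.closedBall g ε := by
  ext u
  rw [Metric.mem_closedBall, dist_eq_norm]
  constructor
  · intro hu
    refine le_of_forall_pos_le_add fun δ hδ => norm_le_of_eventually_inner_le (y := y) (by linarith) ?_
    filter_upwards [hu (δ / 2) (half_pos hδ), hf.eventually_abs_sub_inner_le (half_pos hδ)]
      with z hzu hzg
    rw [inner_sub_left]
    linarith [(abs_le.mp hzg).2]
  · intro hu η hη
    filter_upwards [hf.eventually_abs_sub_inner_le hη] with z hz
    have hcs : inner ℝ (u - g) (z - y) ≤ ε * ‖z - y‖ :=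
      (real_inner_le_norm _ _).trans (mul_le_mul_of_nonneg_right hu (norm_nonneg _))
    rw [inner_sub_left] at hcs
    linarith [(abs_le.mp hz).1]

theorem stmt_9 {n : ℕ} (f : EuclideanSpace ℝ (Fin n) → ℝ) (x : EuclideanSpace ℝ (Fin n))
    (hf : ContDiffAt ℝ 1 f x) (ε : ℝ) (hε : 0 ≤ ε) :
    lfesub ε f x = Metric.closedBall (gradient f x) ε := by
  ext v
  constructor
  · rintro ⟨yl, vl, hyl, -, hvl, hvl_lim⟩
    have hdist : Tendsto (fun l => dist (vl l) (∇ f (yl l))) atTop (𝓝 (dist v (∇ f x))) :=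
      hvl_lim.dist (hf.continuousAt_gradient.tendsto.comp hyl)
    refine le_of_tendsto hdist ?_
    filter_upwards [hyl.eventually hf.eventually_hasGradientAt] with l hl
    exact Metric.mem_closedBall.mp ((fesub_eq_closedBall hε hl).subset (hvl l))
  · intro hv
    refine ⟨fun _ => x, fun _ => v, tendsto_const_nhds, tendsto_const_nhds, fun _ => ?_,
      tendsto_const_nhds⟩
    rwa [fesub_eq_closedBall hε hf.eventually_hasGradientAt.self_of_nhds]
end

section
/- Let F: ℝⁿ → ℝ^m be continuous, componentwise quasiconvex, with 0 ⪯ F, and suppose the sequence {x^k} converges to x*, z_{k} → z̄ ∈ ℝ^m_+ \ {0} along a subsequence, α_k → 0, and x^{k+1} minimizes ⟨F(x), z_k⟩ + (α_k/2)‖x − x^k‖² over Ω_k = {x : F(x) ⪯ F(x^k)}. If x* ∈ E = {x : F(x) ⪯ F(x^k) ∀k}, then ⟨F(x*), z̄⟩ ≤ ⟨F(x), z̄⟩ for all x ∈ E, and consequently x* is a weak Pareto solution of min F over ℝⁿ. -/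
open Filter

theorem stmt_16 {n m : ℕ} (F : EuclideanSpace ℝ (Fin n) → Fin m → ℝ)
    (hcont : Continuous F)
    (hqc : ∀ i, QuasiconvexOn ℝ Set.univ (fun x => F x i))
    (hpos : ∀ x i, 0 ≤ F x i)
    (x : ℕ → EuclideanSpace ℝ (Fin n)) (xs : EuclideanSpace ℝ (Fin n))
    (hxconv : Tendsto x atTop (nhds xs))
    (z : ℕ → Fin m → ℝ) (hz : ∀ k i, 0 ≤ z k i) (hz0 : ∀ k, z k ≠ 0)
    (hznorm : ∀ k, ‖(WithLp.equiv 2 (Fin m → ℝ)).symm (z k)‖ = 1)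
    (zbar : Fin m → ℝ) (hzbar : ∀ i, 0 ≤ zbar i) (hzbar0 : zbar ≠ 0)
    (φ : ℕ → ℕ) (hφ : StrictMono φ)
    (hzconv : Tendsto (fun j => z (φ j)) atTop (nhds zbar))
    (α : ℕ → ℝ) (hα : ∀ k, 0 < α k) (hα0 : Tendsto α atTop (nhds 0))
    (hmin : ∀ k, x (k + 1) ∈ {u | ∀ i, F u i ≤ F (x k) i} ∧
      ∀ w ∈ {u | ∀ i, F u i ≤ F (x k) i},
        (∑ i, F (x (k + 1)) i * z k i) + α k / 2 * ‖x (k + 1) - x k‖ ^ 2 ≤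
          (∑ i, F w i * z k i) + α k / 2 * ‖w - x k‖ ^ 2)
    (E : Set (EuclideanSpace ℝ (Fin n)))
    (hE : E = {u | ∀ k, ∀ i, F u i ≤ F (x k) i}) (hxsE : xs ∈ E) :
    (∀ w ∈ E, ∑ i, F xs i * zbar i ≤ ∑ i, F w i * zbar i) ∧
      ¬ ∃ w, ∀ i, F w i < F xs i := by
  have key : ∀ w ∈ E, ∑ i, F xs i * zbar i ≤ ∑ i, F w i * zbar i := by
    intro w hw
    rw [hE] at hw
    have hφtt : Tendsto φ atTop atTop := hφ.tendsto_atTop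
    have h1tt : Tendsto (fun j => φ j + 1) atTop atTop :=
      tendsto_atTop_mono (fun j => Nat.le_succ_of_le (hφ.id_le j)) tendsto_id
    have hx1 : Tendsto (fun j => x (φ j + 1)) atTop (nhds xs) := hxconv.comp h1tt
    have hxφ : Tendsto (fun j => x (φ j)) atTop (nhds xs) := hxconv.comp hφtt
    have hF1 : Tendsto (fun j => F (x (φ j + 1))) atTop (nhds (F xs)) :=
      (hcont.tendsto xs).comp hx1
    have hlhs : Tendsto (fun j => ∑ i, F (x (φ j + 1)) i * z (φ j) i) atTop
        (nhds (∑ i, F xs i * zbar i)) := by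
      apply tendsto_finset_sum
      intro i _
      exact (tendsto_pi_nhds.mp hF1 i).mul (tendsto_pi_nhds.mp hzconv i)
    have hrhs : Tendsto (fun j => (∑ i, F w i * z (φ j) i) + α (φ j) / 2 * ‖w - x (φ j)‖ ^ 2)
        atTop (nhds ((∑ i, F w i * zbar i) + 0 / 2 * ‖w - xs‖ ^ 2)) := by
      apply Tendsto.add
      · apply tendsto_finset_sum
        intro i _
        exact tendsto_const_nhds.mul (tendsto_pi_nhds.mp hzconv i)
      · exact ((hα0.comp hφtt).div_const 2).mul
          (((tendsto_const_nhds.sub hxφ).norm).pow 2)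
    rw [show (0:ℝ) / 2 * ‖w - xs‖ ^ 2 = 0 by ring, add_zero] at hrhs
    refine le_of_tendsto_of_tendsto' hlhs hrhs ?_
    intro j
    have h := (hmin (φ j)).2 w (fun i => hw (φ j) i)
    have hn : 0 ≤ α (φ j) / 2 * ‖x (φ j + 1) - x (φ j)‖ ^ 2 :=
      mul_nonneg (by linarith [hα (φ j)]) (by positivity)
    linarith
  refine ⟨key, ?_⟩
  rintro ⟨w, hw⟩
  have hwE : w ∈ E := by
    rw [hE]; intro k i
    exact le_trans (hw i).le (by rw [hE] at hxsE; exact hxsE k i)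
  have h := key w hwE
  obtain ⟨i0, hi0⟩ : ∃ i, 0 < zbar i := by
    by_contra hc
    push_neg at hc
    exact hzbar0 (funext fun i => le_antisymm (hc i) (hzbar i))
  have hlt : ∑ i, F w i * zbar i < ∑ i, F xs i * zbar i := by
    apply Finset.sum_lt_sum (fun i _ => mul_le_mul_of_nonneg_right (hw i).le (hzbar i))
    exact ⟨i0, Finset.mem_univ i0, mul_lt_mul_of_pos_right (hw i0) hi0⟩
  linarith
end

section
/- Let x* ∈ E where E = {x : F(x) ⪯ F(x^k) ∀k}, z̄ ∈ ℝ^m_+ \ {0}, and suppose ⟨F(x*), z̄⟩ ≤ ⟨F(x), z̄⟩ for all x ∈ E. Then x* is a weak Pareto solution of min F over ℝⁿ. -/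
theorem stmt_17 {n m : ℕ} (F : EuclideanSpace ℝ (Fin n) → Fin m → ℝ)
    (x : ℕ → EuclideanSpace ℝ (Fin n))
    (E : Set (EuclideanSpace ℝ (Fin n)))
    (hE : E = {u | ∀ k : ℕ, ∀ i, F u i ≤ F (x k) i})
    (xs : EuclideanSpace ℝ (Fin n)) (hxsE : xs ∈ E)
    (zbar : Fin m → ℝ) (hzbar : ∀ i, 0 ≤ zbar i) (hzbar0 : zbar ≠ 0)
    (hmin : ∀ w ∈ E, ∑ i, F xs i * zbar i ≤ ∑ i, F w i * zbar i) :
    ¬ ∃ w, ∀ i, F w i < F xs i := by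
  rintro ⟨w, hw⟩
  have hwE : w ∈ E := by
    rw [hE] at hxsE ⊢
    intro k i
    exact le_trans (hw i).le (hxsE k i)
  have hle := hmin w hwE
  -- strict inequality the other way
  obtain ⟨j, hj⟩ : ∃ j, zbar j ≠ 0 := by
    by_contra h
    push_neg at h
    exact hzbar0 (funext h)
  have hjpos : 0 < zbar j := lt_of_le_of_ne (hzbar j) (Ne.symm hj)
  have hstrict : ∑ i, F w i * zbar i < ∑ i, F xs i * zbar i := by
    apply Finset.sum_lt_sum
    · intro i _
      exact mul_le_mul_of_nonneg_right (hw i).le (hzbar i)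
    · exact ⟨j, Finset.mem_univ j, mul_lt_mul_of_pos_right (hw j) hjpos⟩
  linarith
end
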